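/- Let $(w_t)$ be a sequence of reals satisfying $w_{t+1} \leq (1 - \frac{c_1}{(t+1)^{\delta_1}}) w_t + \frac{c_2}{(t+1)^{\delta_2}}$ with $w_t \geq 0$ for all $t$, $c_1, c_2 > 0$, $0 < \delta_1 < \delta_2 < 1$, and $c_1/(t+1)^{\delta_1} \leq 1$ for all $t$. Then for every $0 \leq \delta_0 < \delta_2 - \delta_1$, $\lim_{t\to\infty} (t+1)^{\delta_0} w_t = 0$. -/

import Mathlib

open Filter Finset Real Topology

/-!
Put `u t = (t + 1) ^ δ0 * w t` and `a t = c1 / (t + 1) ^ δ1`. Since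
`((t + 2) / (t + 1)) ^ δ0 ≤ 1 + 1 / (t + 1)` and `1 / (t + 1) = o(a t)` (as `δ1 < 1`), eventually
`u (t + 1) ≤ (1 - a t / 2) * u t + (a t / 2) * β t` with `β t = O((t + 1) ^ (δ0 + δ1 - δ2)) → 0`,
while `∑ a t = ∞`. For such a recursion the excess `max (u t - ε) 0` is eventually contracted by
`1 - a t / 2 ≤ exp (-a t / 2)`, so it tends to `0` for every `ε > 0`.
-/

theorem tendsto_zero_of_le_one_sub_mul {v α : ℕ → ℝ} (hv : ∀ t, 0 ≤ v t)
    (hα : Tendsto (fun n => ∑ i ∈ range n, α i) atTop atTop)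
    (hrec : ∀ᶠ t in atTop, v (t + 1) ≤ (1 - α t) * v t) :
    Tendsto v atTop (𝓝 0) := by
  obtain ⟨T, hT⟩ := eventually_atTop.1 hrec
  have hbound : ∀ n ≥ T, v n ≤ exp (-∑ i ∈ Ico T n, α i) * v T := by
    intro n hn
    induction n, hn using Nat.le_induction with
    | base => simp
    | succ n hn ih =>
      calc v (n + 1) ≤ (1 - α n) * v n := hT n hn
        _ ≤ exp (-α n) * v n :=
          mul_le_mul_of_nonneg_right (by linarith [add_one_le_exp (-α n)]) (hv n)
        _ ≤ exp (-α n) * (exp (-∑ i ∈ Ico T n, α i) * v T) := by gcongr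
        _ = exp (-∑ i ∈ Ico T (n + 1), α i) * v T := by
          rw [sum_Ico_succ_top hn, neg_add, exp_add]; ring
  have hsum : Tendsto (fun n => ∑ i ∈ Ico T n, α i) atTop atTop :=
    (tendsto_atTop_add_const_right _ _ hα).congr'
      (eventually_atTop.2 ⟨T, fun n hn => (sum_Ico_eq_sub α hn).symm⟩)
  refine squeeze_zero' (.of_forall hv) (eventually_atTop.2 ⟨T, hbound⟩) ?_
  simpa using (tendsto_exp_atBot.comp (tendsto_neg_atTop_atBot.comp hsum)).mul_const (v T)

theorem tendsto_zero_of_le_one_sub_mul_add_mul {u α β : ℕ → ℝ} (hu : ∀ t, 0 ≤ u t)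
    (hα0 : ∀ t, 0 ≤ α t) (hα1 : ∀ t, α t ≤ 1)
    (hα : Tendsto (fun n => ∑ i ∈ range n, α i) atTop atTop)
    (hβ : Tendsto β atTop (𝓝 0))
    (hrec : ∀ᶠ t in atTop, u (t + 1) ≤ (1 - α t) * u t + α t * β t) :
    Tendsto u atTop (𝓝 0) := by
  rw [Metric.tendsto_nhds]
  intro ε hε
  have hexcess : Tendsto (fun t => max (u t - ε / 2) 0) atTop (𝓝 0) := by
    refine tendsto_zero_of_le_one_sub_mul (fun t => le_max_right _ _) hα ?_
    filter_upwards [hrec, hβ.eventually (eventually_le_nhds (half_pos hε))] with t hrec hβt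
    have hα1t : 0 ≤ 1 - α t := sub_nonneg.2 (hα1 t)
    refine max_le ?_ (mul_nonneg hα1t (le_max_right _ _))
    calc u (t + 1) - ε / 2 ≤ (1 - α t) * (u t - ε / 2) := by nlinarith [hα0 t]
      _ ≤ (1 - α t) * max (u t - ε / 2) 0 := by gcongr; exact le_max_left _ _
  filter_upwards [hexcess.eventually (eventually_lt_nhds (half_pos hε))] with t ht
  rw [Real.dist_eq, sub_zero, abs_of_nonneg (hu t)]
  linarith [le_max_left (u t - ε / 2) 0]

theorem tendsto_sum_range_div_add_one_rpow_atTop {c p : ℝ} (hc : 0 < c) (hp : p ≤ 1) :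
    Tendsto (fun n => ∑ i ∈ range n, c / ((i : ℝ) + 1) ^ p) atTop atTop := by
  refine (not_summable_iff_tendsto_nat_atTop_of_nonneg fun i => by positivity).1 fun h => ?_
  have : Summable fun n : ℕ => ((n : ℝ) ^ p)⁻¹ := by
    refine (summable_nat_add_iff 1).1 ((h.mul_left c⁻¹).congr fun n => ?_)
    push_cast
    field_simp
  exact (summable_nat_rpow_inv.1 this).not_ge hp

theorem eventually_one_div_le_div_rpow {c p : ℝ} (hc : 0 < c) (hp : p < 1) :
    ∀ᶠ x : ℝ in atTop, 1 / x ≤ c / x ^ p := by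
  filter_upwards [(tendsto_rpow_neg_atTop (sub_pos.2 hp)).eventually (eventually_le_nhds hc),
    eventually_gt_atTop 0] with x hx hx0
  calc 1 / x = x ^ (-(1 - p)) / x ^ p := by
        rw [← rpow_sub hx0, neg_sub, sub_sub_cancel_left, rpow_neg_one, one_div]
    _ ≤ c / x ^ p := by gcongr

theorem add_one_rpow_le {x p : ℝ} (hx : 0 < x) (hp : p ≤ 1) :
    (x + 1) ^ p ≤ (1 + 1 / x) * x ^ p := by
  have hx' : x + 1 = (1 + 1 / x) * x := by field_simp
  rw [hx', mul_rpow (by positivity) hx.le]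
  gcongr
  exact rpow_le_self_of_one_le (le_add_of_nonneg_right (by positivity)) hp

theorem add_one_rpow_mul_le {x p a b w w' : ℝ} (hx : 1 ≤ x) (hp : p ≤ 1)
    (ha : a ≤ 1) (hxa : 1 / x ≤ a / 2) (hw : 0 ≤ w) (hb : 0 ≤ b)
    (hw' : w' ≤ (1 - a) * w + b) :
    (x + 1) ^ p * w' ≤ (1 - a / 2) * (x ^ p * w) + 2 * x ^ p * b := by
  have hx0 : 0 < x := by linarith
  have hcoef : (1 + 1 / x) * (1 - a) ≤ 1 - a / 2 := by nlinarith [one_div_pos.2 hx0]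
  calc (x + 1) ^ p * w' ≤ (x + 1) ^ p * ((1 - a) * w + b) := by gcongr
    _ ≤ (1 + 1 / x) * x ^ p * ((1 - a) * w + b) :=
        mul_le_mul_of_nonneg_right (add_one_rpow_le hx0 hp) (by nlinarith)
    _ = (1 + 1 / x) * (1 - a) * (x ^ p * w) + (1 + 1 / x) * x ^ p * b := by ring
    _ ≤ (1 - a / 2) * (x ^ p * w) + 2 * x ^ p * b := by gcongr; linarith

/-- Inequality version of the time-varying convergence lemma: a nonnegative
sequence satisfying
`w_{t+1} ≤ (1 - c1/(t+1)^δ1) w_t + c2/(t+1)^δ2` converges to `0` at rate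
`(t+1)^δ0` for every `0 ≤ δ0 < δ2 - δ1`. -/
theorem timeVaryingConvergence_ineq
    (c1 c2 δ1 δ2 : ℝ) (hc1 : 0 < c1) (hc2 : 0 < c2)
    (hδ1 : 0 < δ1) (hδ12 : δ1 < δ2) (hδ2 : δ2 < 1)
    (w : ℕ → ℝ) (hpos : ∀ t, 0 ≤ w t)
    (hcoef : ∀ t : ℕ, c1 / ((t : ℝ) + 1) ^ δ1 ≤ 1)
    (hw : ∀ t : ℕ, w (t + 1) ≤
      (1 - c1 / ((t : ℝ) + 1) ^ δ1) * w t + c2 / ((t : ℝ) + 1) ^ δ2) :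
    ∀ δ0 : ℝ, 0 ≤ δ0 → δ0 < δ2 - δ1 →
      Filter.Tendsto (fun t : ℕ => ((t : ℝ) + 1) ^ δ0 * w t)
        Filter.atTop (nhds 0) := by
  intro δ0 _ hδ0
  have hδ1_lt_one : δ1 < 1 := hδ12.trans hδ2
  have hx : Tendsto (fun t : ℕ => (t : ℝ) + 1) atTop atTop :=
    tendsto_atTop_add_const_right _ 1 tendsto_natCast_atTop_atTop
  refine tendsto_zero_of_le_one_sub_mul_add_mul (α := fun t => c1 / 2 / ((t : ℝ) + 1) ^ δ1)
    (β := fun t => 4 * c2 / c1 * ((t : ℝ) + 1) ^ (-(δ2 - δ1 - δ0)))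
    (fun t => mul_nonneg (by positivity) (hpos t)) (fun t => by positivity) (fun t => ?_)
    (tendsto_sum_range_div_add_one_rpow_atTop (half_pos hc1) hδ1_lt_one.le) ?_ ?_
  · rw [div_right_comm]; linarith [hcoef t]
  · simpa using ((tendsto_rpow_neg_atTop (sub_pos.2 hδ0)).comp hx).const_mul (4 * c2 / c1)
  filter_upwards [hx.eventually (eventually_one_div_le_div_rpow (half_pos hc1) hδ1_lt_one)] with t ht
  have hx0 : (0 : ℝ) < t + 1 := by positivity
  have hnoise : 2 * ((t : ℝ) + 1) ^ δ0 * (c2 / ((t : ℝ) + 1) ^ δ2) =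
      c1 / 2 / ((t : ℝ) + 1) ^ δ1 * (4 * c2 / c1 * ((t : ℝ) + 1) ^ (-(δ2 - δ1 - δ0))) := by
    rw [show -(δ2 - δ1 - δ0) = δ0 + δ1 - δ2 by ring, rpow_sub hx0, rpow_add hx0]
    field_simp
    ring
  rw [← hnoise, div_right_comm]
  push_cast
  have hxa : 1 / ((t : ℝ) + 1) ≤ c1 / ((t : ℝ) + 1) ^ δ1 / 2 := by rwa [div_right_comm]
  exact add_one_rpow_mul_le (by simp) (by linarith) (hcoef t) hxa (hpos t) (by positivity) (hw t)
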